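/- For a > 0 and b ≥ 0, the integral ∫₀^∞ exp(-a p² - b/p²) dp equals (1/2)√(π/a) · exp(-2√(ab)). -/

import Mathlib

/-! For `α, β > 0` the map `φ x = α x - β / x` is an increasing bijection of `(0, ∞)` onto `ℝ`
with `φ' x = α + β / x²`, so `∫ g = ∫₀^∞ (α + β / x²) g (φ x) dx`. The involution
`x ↦ β / (α x)` of `(0, ∞)` turns `φ` into `-φ` and carries the `β / x²` part of the weight onto
the `α` part, so for even `g` we get `∫₀^∞ g (φ x) dx = (2α)⁻¹ ∫ g` (Cauchy–Schlömilch).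
Completing the square, `-a p² - b / p² = -2√(ab) - (√a p - √b / p)²`, and the Gaussian
integral finishes the proof. -/

open MeasureTheory Set Real

section CauchySchlomilch

variable {E : Type*} [NormedAddCommGroup E] [NormedSpace ℝ E]

lemma hasDerivAt_const_div (c : ℝ) {x : ℝ} (hx : x ≠ 0) :
    HasDerivAt (fun y => c / y) (-(c / x ^ 2)) x := by
  simpa [div_eq_mul_inv] using (hasDerivAt_inv hx).const_mul c

lemma image_const_div_Ioi_zero {c : ℝ} (hc : 0 < c) :
    (fun x => c / x) '' Ioi (0 : ℝ) = Ioi 0 := by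
  refine Subset.antisymm (image_subset_iff.2 fun x hx => div_pos hc hx) fun y hy => ?_
  exact ⟨c / y, div_pos hc hy, div_div_cancel₀ hc.ne'⟩

lemma integral_Ioi_comp_const_div {c : ℝ} (hc : 0 < c) (g : ℝ → E) :
    ∫ x in Ioi 0, (c / x ^ 2) • g (c / x) = ∫ x in Ioi 0, g x := by
  have hinj : InjOn (fun x => c / x) (Ioi (0 : ℝ)) := fun _ _ _ _ hxy =>
    inv_injective (mul_left_cancel₀ hc.ne' (by simpa only [div_eq_mul_inv] using hxy))
  conv_rhs => rw [← image_const_div_Ioi_zero hc, integral_image_eq_integral_abs_deriv_smul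
    measurableSet_Ioi (fun x hx => (hasDerivAt_const_div c (ne_of_gt hx)).hasDerivWithinAt)
    hinj]
  refine setIntegral_congr_fun measurableSet_Ioi fun x hx => ?_
  rw [abs_neg, abs_of_pos (div_pos hc (pow_pos hx 2))]

variable {α β : ℝ}

lemma hasDerivAt_mul_sub_div (α β : ℝ) {x : ℝ} (hx : x ≠ 0) :
    HasDerivAt (fun y => α * y - β / y) (α + β / x ^ 2) x := by
  have hlin : HasDerivAt (fun y => α * y) α x := by simpa using (hasDerivAt_id x).const_mul α
  exact (hlin.sub (hasDerivAt_const_div β hx)).congr_deriv (sub_neg_eq_add _ _)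

lemma strictMonoOn_mul_sub_div (hα : 0 < α) (hβ : 0 ≤ β) :
    StrictMonoOn (fun x => α * x - β / x) (Ioi 0) := fun x hx y _ hxy => by
  have : β / y ≤ β / x := div_le_div_of_nonneg_left hβ hx hxy.le
  have : α * x < α * y := mul_lt_mul_of_pos_left hxy hα
  dsimp only
  linarith

-- The preimage of `u` is the positive root of `α x² - u x - β`.
lemma image_mul_sub_div_Ioi_zero (hα : 0 < α) (hβ : 0 < β) :
    (fun x => α * x - β / x) '' Ioi 0 = univ := by
  refine eq_univ_of_forall fun u => ?_
  set d := √(u ^ 2 + 4 * α * β)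
  have hd : d ^ 2 = u ^ 2 + 4 * α * β := sq_sqrt (by positivity)
  have hud : 0 < u + d := by nlinarith [sqrt_nonneg (u ^ 2 + 4 * α * β), sq_nonneg (d + u)]
  refine ⟨(u + d) / (2 * α), div_pos hud (by positivity), ?_⟩
  field_simp
  nlinarith

theorem integral_Ioi_comp_mul_sub_div_of_even {g : ℝ → E} (hg : Integrable g)
    (heven : ∀ u, g (-u) = g u) (hα : 0 < α) (hβ : 0 < β) :
    ∫ x in Ioi 0, g (α * x - β / x) = (2 * α)⁻¹ • ∫ u, g u := by
  set φ := fun x => α * x - β / x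
  have hφ' : ∀ x ∈ Ioi (0 : ℝ), HasDerivWithinAt φ (α + β / x ^ 2) (Ioi 0) x :=
    fun x hx => (hasDerivAt_mul_sub_div α β (ne_of_gt hx)).hasDerivWithinAt
  have hφinj := (strictMonoOn_mul_sub_div hα hβ.le).injOn
  have habs : ∀ x, |α + β / x ^ 2| = α + β / x ^ 2 := fun x => abs_of_pos (by positivity)
  have hchange : ∫ u, g u = ∫ x in Ioi 0, (α + β / x ^ 2) • g (φ x) := by
    rw [← setIntegral_univ, ← image_mul_sub_div_Ioi_zero hα hβ,
      integral_image_eq_integral_abs_deriv_smul measurableSet_Ioi hφ' hφinj]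
    simp only [habs]
  have hweighted : IntegrableOn (fun x => (α + β / x ^ 2) • g (φ x)) (Ioi 0) := by
    have := (integrableOn_image_iff_integrableOn_abs_deriv_smul measurableSet_Ioi hφ' hφinj g).1
    rw [image_mul_sub_div_Ioi_zero hα hβ, integrableOn_univ] at this
    simpa only [habs] using this hg
  have hplain : IntegrableOn (fun x => g (φ x)) (Ioi 0) := by
    have hbound : ∀ x, ‖(α + β / x ^ 2)⁻¹‖ ≤ α⁻¹ := fun x => by
      rw [norm_inv, norm_of_nonneg (by positivity)]
      exact inv_anti₀ hα (le_add_of_nonneg_right (by positivity))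
    have hmeas : Measurable fun x : ℝ => (α + β / x ^ 2)⁻¹ := by fun_prop
    refine IntegrableOn.congr_fun (hweighted.bdd_smul α⁻¹ hmeas.aestronglyMeasurable
      (ae_of_all _ hbound)) (fun x _ => ?_) measurableSet_Ioi
    exact inv_smul_smul₀ (by positivity) _
  have hsymm : ∫ x in Ioi 0, (β / x ^ 2) • g (φ x) = α • ∫ x in Ioi 0, g (φ x) := by
    rw [← integral_Ioi_comp_const_div (div_pos hβ hα), ← integral_smul]
    refine setIntegral_congr_fun measurableSet_Ioi fun x (hx : 0 < x) => ?_
    have hφ_inv : φ (β / α / x) = -φ x := by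
      simp only [φ]
      field_simp
      ring
    have hweight : β / α / x ^ 2 * (β / (β / α / x) ^ 2) = α := by
      field_simp
    rw [smul_smul, hweight, hφ_inv, heven]
  have hsplit : ∀ x, (α + β / x ^ 2) • g (φ x) = α • g (φ x) + (β / x ^ 2) • g (φ x) :=
    fun x => add_smul _ _ _
  have hrest : IntegrableOn (fun x => (β / x ^ 2) • g (φ x)) (Ioi 0) := by
    refine (hweighted.sub (hplain.smul α)).congr_fun (fun x _ => ?_) measurableSet_Ioi
    simp only [Pi.sub_apply, Pi.smul_apply, hsplit, add_sub_cancel_left]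
  have htotal : ∫ u, g u = (2 * α) • ∫ x in Ioi 0, g (φ x) := by
    rw [hchange]
    simp only [hsplit]
    rw [integral_add (f := fun x => α • g (φ x)) (hplain.smul α) hrest, integral_smul, hsymm,
      two_mul, add_smul]
  rw [htotal, inv_smul_smul₀ (by positivity)]

end CauchySchlomilch

lemma neg_mul_sq_sub_div_sq {a b : ℝ} (ha : 0 ≤ a) (hb : 0 ≤ b) {p : ℝ} (hp : p ≠ 0) :
    -a * p ^ 2 - b / p ^ 2 = -2 * √(a * b) + -(√a * p - √b / p) ^ 2 := by
  conv_lhs => rw [← sq_sqrt ha, ← sq_sqrt hb]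
  rw [sqrt_mul ha]
  field_simp
  ring

/-- For `a > 0`, `b ≥ 0`,
`∫₀^∞ exp(-a p² - b/p²) dp = (1/2)√(π/a) e^{-2√(ab)}` (Glasser's integral). -/
theorem glasser_integral (a b : ℝ) (ha : 0 < a) (hb : 0 ≤ b) :
    ∫ p in Set.Ioi (0:ℝ), Real.exp (-a * p^2 - b / p^2)
      = (1/2) * Real.sqrt (Real.pi / a) * Real.exp (-2 * Real.sqrt (a*b)) := by
  rcases hb.eq_or_lt with rfl | hb_pos
  · simp only [zero_div, sub_zero, mul_zero, sqrt_zero, exp_zero, mul_one, integral_gaussian_Ioi]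
    ring
  have hgauss : ∫ u, exp (-u ^ 2) = √π := by simpa using integral_gaussian 1
  have heven : ∀ u : ℝ, exp (-(-u) ^ 2) = exp (-u ^ 2) := fun u => by rw [neg_sq]
  rw [setIntegral_congr_fun measurableSet_Ioi fun p (hp : 0 < p) => by
      rw [neg_mul_sq_sub_div_sq ha.le hb hp.ne', exp_add], integral_const_mul,
    integral_Ioi_comp_mul_sub_div_of_even (g := fun u => exp (-u ^ 2))
      (by simpa using integrable_exp_neg_mul_sq one_pos) heven (sqrt_pos.2 ha) (sqrt_pos.2 hb_pos),
    hgauss, sqrt_div pi_pos.le, smul_eq_mul]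
  ring
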